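/- arXiv:2602.11383 — 3 statements merged into one kernel-verified Lean document; each statement's English description precedes it below -/
import Mathlib

section
/- Let C : ℝ^d → ℝ be L-smooth, let θ ∈ ℝ^d be fixed, let η > 0 and p_min ∈ (0,1], and let δ be a random freezing mask whose coordinates satisfy E[δ_k] ≥ p_min for all k. Then the masked gradient step satisfies the expected descent inequality E[C(θ − η (δ ⊙ ∇C(θ)))] ≤ C(θ) − η (p_min − Lη/2) ‖∇C(θ)‖². -/
/-!
Along the segment from `x` to `y`, the Lipschitz bound on `∇C` makes
`t ↦ C(x + t(y - x)) - t⟪∇C x, y - x⟫ - (L/2) t² ‖y - x‖²` antitone, which is the descent lemma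
`C y ≤ C x + ⟪∇C x, y - x⟫ + (L/2) ‖y - x‖²`. For the masked step `y = θ - η (δ ⊙ g)`,
`g = ∇C θ`, the identity `δ_k² = δ_k` makes both `⟪g, δ ⊙ g⟫` and `‖δ ⊙ g‖²` equal to
`S = ∑ δ_k g_k²`, so `C y ≤ C θ - (η - Lη²/2) S`. Taking expectations and using
`pmin ‖g‖² ≤ E S ≤ ‖g‖²` (together with `L ≥ 0`) gives the bound.
-/

open MeasureTheory

theorem nonneg_of_norm_sub_le_mul_norm_sub {E F : Type*} [NormedAddCommGroup E] [Nontrivial E]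
    [SeminormedAddCommGroup F] {g : E → F} {L : ℝ} (h : ∀ x y, ‖g x - g y‖ ≤ L * ‖x - y‖) :
    0 ≤ L := by
  obtain ⟨x, hx⟩ := exists_ne (0 : E)
  have hpos : 0 < ‖x - 0‖ := by simpa using hx
  exact nonneg_of_mul_nonneg_left ((norm_nonneg _).trans (h x 0)) hpos

theorem le_add_inner_gradient_add_sq {E : Type*} [NormedAddCommGroup E] [InnerProductSpace ℝ E]
    [CompleteSpace E] {f : E → ℝ} {L : ℝ} (hf : Differentiable ℝ f)
    (hL : ∀ x y, ‖gradient f x - gradient f y‖ ≤ L * ‖x - y‖) (x y : E) :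
    f y ≤ f x + inner ℝ (gradient f x) (y - x) + L / 2 * ‖y - x‖ ^ 2 := by
  set v := y - x
  let φ : ℝ → ℝ := fun t =>
    f (x + t • v) - t * inner ℝ (gradient f x) v - L / 2 * t ^ 2 * ‖v‖ ^ 2
  have hφ : ∀ t, HasDerivAt φ
      (inner ℝ (gradient f (x + t • v) - gradient f x) v - L * t * ‖v‖ ^ 2) t := by
    intro t
    have hline : HasDerivAt (fun s : ℝ => x + s • v) v t := by
      simpa using ((hasDerivAt_id t).smul_const v).const_add x
    have hf' := (hf (x + t • v)).hasGradientAt.hasFDerivAt.comp_hasDerivAt t hline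
    refine HasDerivAt.congr_deriv (f := φ)
      ((hf'.sub ((hasDerivAt_id t).mul_const (inner ℝ (gradient f x) v))).sub
        (((hasDerivAt_pow 2 t).const_mul (L / 2)).mul_const (‖v‖ ^ 2))) ?_
    rw [InnerProductSpace.toDual_apply_apply, inner_sub_left]
    ring
  have hanti : AntitoneOn φ (Set.Ici 0) := by
    refine antitoneOn_of_hasDerivWithinAt_nonpos (convex_Ici 0)
      (fun t _ => (hφ t).continuousAt.continuousWithinAt)
      (fun t _ => (hφ t).hasDerivWithinAt) fun t ht => ?_
    rw [interior_Ici, Set.mem_Ioi] at ht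
    calc inner ℝ (gradient f (x + t • v) - gradient f x) v - L * t * ‖v‖ ^ 2
        ≤ ‖gradient f (x + t • v) - gradient f x‖ * ‖v‖ - L * t * ‖v‖ ^ 2 := by
          gcongr; exact real_inner_le_norm _ _
      _ ≤ L * ‖x + t • v - x‖ * ‖v‖ - L * t * ‖v‖ ^ 2 := by gcongr; exact hL _ _
      _ = 0 := by
          rw [add_sub_cancel_left, norm_smul, Real.norm_of_nonneg ht.le]; ring
  have h10 : φ 1 ≤ φ 0 := hanti Set.self_mem_Ici (Set.mem_Ici.2 zero_le_one) zero_le_one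
  simp only [φ, one_smul, zero_smul, add_zero, one_mul, one_pow, mul_one, zero_mul, sub_zero,
    ne_eq, OfNat.ofNat_ne_zero, not_false_eq_true, zero_pow, mul_zero, v, add_sub_cancel] at h10
  linarith

section Mask

variable {ι : Type*} [Fintype ι] {m : ι → ℝ}

theorem inner_toLp_mul_self (m : ι → ℝ) (v : EuclideanSpace ℝ ι) :
    inner ℝ v (WithLp.toLp 2 fun k => m k * v k) = ∑ k, m k * v k ^ 2 := by
  simp only [PiLp.inner_apply, RCLike.inner_apply, conj_trivial]
  exact Finset.sum_congr rfl fun k _ => by ring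

theorem norm_sq_toLp_mul_of_mem_zero_one (hm : ∀ k, m k = 0 ∨ m k = 1)
    (v : EuclideanSpace ℝ ι) :
    ‖WithLp.toLp 2 fun k => m k * v k‖ ^ 2 = ∑ k, m k * v k ^ 2 := by
  rw [EuclideanSpace.norm_sq_eq]
  refine Finset.sum_congr rfl fun k _ => ?_
  rcases hm k with h | h <;> simp [h]

theorem norm_toLp_mul_le (hm : ∀ k, |m k| ≤ 1) (v : EuclideanSpace ℝ ι) :
    ‖WithLp.toLp 2 fun k => m k * v k‖ ≤ ‖v‖ := by
  refine le_of_sq_le_sq ?_ (norm_nonneg v)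
  rw [EuclideanSpace.norm_sq_eq, EuclideanSpace.norm_sq_eq]
  refine Finset.sum_le_sum fun k _ => ?_
  gcongr
  rw [PiLp.toLp_apply, norm_mul, Real.norm_eq_abs (m k)]
  exact mul_le_of_le_one_left (norm_nonneg _) (hm k)

theorem sum_mul_sq_le_norm_sq (hm : ∀ k, m k ≤ 1) (v : EuclideanSpace ℝ ι) :
    ∑ k, m k * v k ^ 2 ≤ ‖v‖ ^ 2 := by
  rw [EuclideanSpace.norm_sq_eq]
  refine Finset.sum_le_sum fun k _ => ?_
  rw [Real.norm_eq_abs, sq_abs]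
  exact mul_le_of_le_one_left (sq_nonneg _) (hm k)

theorem masked_gradient_step_le {f : EuclideanSpace ℝ ι → ℝ} {L : ℝ} (hf : Differentiable ℝ f)
    (hL : ∀ x y, ‖gradient f x - gradient f y‖ ≤ L * ‖x - y‖) (x : EuclideanSpace ℝ ι) (η : ℝ)
    (hm : ∀ k, m k = 0 ∨ m k = 1) :
    f (x - η • WithLp.toLp 2 fun k => m k * gradient f x k) ≤
      f x - (η - L * η ^ 2 / 2) * ∑ k, m k * gradient f x k ^ 2 := by
  have h := le_add_inner_gradient_add_sq hf hL x
    (x - η • WithLp.toLp 2 fun k => m k * gradient f x k)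
  rw [sub_sub_cancel_left, inner_neg_right, inner_smul_right, inner_toLp_mul_self, norm_neg,
    norm_smul, mul_pow, Real.norm_eq_abs, sq_abs, norm_sq_toLp_mul_of_mem_zero_one hm] at h
  linarith

end Mask

theorem Integrable.comp_of_ae_mem_isCompact {Ω E F : Type*} [MeasurableSpace Ω] {μ : Measure Ω}
    [IsFiniteMeasure μ] [TopologicalSpace E] [NormedAddCommGroup F] {f : E → F}
    (hf : Continuous f) {Y : Ω → E} (hY : AEStronglyMeasurable Y μ) {K : Set E}
    (hK : IsCompact K) (hYK : ∀ᵐ ω ∂μ, Y ω ∈ K) : Integrable (fun ω => f (Y ω)) μ := by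
  obtain ⟨c, hc⟩ := hK.exists_bound_of_continuousOn hf.continuousOn
  refine (integrable_const c).mono' (hf.comp_aestronglyMeasurable hY) ?_
  filter_upwards [hYK] with ω hω using hc _ hω

section RandomMask

variable {Ω ι : Type*} [MeasurableSpace Ω] {μ : Measure Ω} [Fintype ι] {δ : Ω → ι → ℝ}

theorem integrable_of_ae_eq_zero_or_one [IsFiniteMeasure μ] {X : Ω → ℝ} (hX : Measurable X)
    (h : ∀ᵐ ω ∂μ, X ω = 0 ∨ X ω = 1) : Integrable X μ := by
  refine (integrable_const 1).mono' hX.aestronglyMeasurable ?_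
  filter_upwards [h] with ω hω
  rcases hω with hω | hω <;> simp [hω]

theorem integral_le_one_of_ae_eq_zero_or_one [IsProbabilityMeasure μ] {X : Ω → ℝ}
    (hX : Measurable X) (h : ∀ᵐ ω ∂μ, X ω = 0 ∨ X ω = 1) : ∫ ω, X ω ∂μ ≤ 1 := by
  refine (integral_mono_ae (integrable_of_ae_eq_zero_or_one hX h) (integrable_const 1) ?_).trans
    (by simp)
  filter_upwards [h] with ω hω
  rcases hω with hω | hω <;> simp [hω]

theorem integral_sum_mul_sq (hδ : ∀ k, Integrable (fun ω => δ ω k) μ) (v : ι → ℝ) :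
    ∫ ω, ∑ k, δ ω k * v k ^ 2 ∂μ = ∑ k, (∫ ω, δ ω k ∂μ) * v k ^ 2 := by
  rw [integral_finsetSum _ fun k _ => (hδ k).mul_const _]
  exact Finset.sum_congr rfl fun k _ => integral_mul_const _ _

theorem mul_norm_sq_le_integral_sum_mul_sq (hδ : ∀ k, Integrable (fun ω => δ ω k) μ) {p : ℝ}
    (hp : ∀ k, p ≤ ∫ ω, δ ω k ∂μ) (v : EuclideanSpace ℝ ι) :
    p * ‖v‖ ^ 2 ≤ ∫ ω, ∑ k, δ ω k * v k ^ 2 ∂μ := by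
  rw [integral_sum_mul_sq hδ, EuclideanSpace.norm_sq_eq, Finset.mul_sum]
  refine Finset.sum_le_sum fun k _ => ?_
  rw [Real.norm_eq_abs, sq_abs]
  exact mul_le_mul_of_nonneg_right (hp k) (sq_nonneg _)

theorem integral_sum_mul_sq_le_norm_sq [IsProbabilityMeasure μ]
    (hmeas : ∀ k, Measurable fun ω => δ ω k) (h01 : ∀ k, ∀ᵐ ω ∂μ, δ ω k = 0 ∨ δ ω k = 1)
    (v : EuclideanSpace ℝ ι) :
    ∫ ω, ∑ k, δ ω k * v k ^ 2 ∂μ ≤ ‖v‖ ^ 2 := by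
  rw [integral_sum_mul_sq fun k => integrable_of_ae_eq_zero_or_one (hmeas k) (h01 k)]
  exact sum_mul_sq_le_norm_sq (fun k => integral_le_one_of_ae_eq_zero_or_one (hmeas k) (h01 k)) v

theorem integrable_comp_sub_smul_toLp_mul [IsFiniteMeasure μ]
    (hmeas : ∀ k, Measurable fun ω => δ ω k) (h01 : ∀ k, ∀ᵐ ω ∂μ, δ ω k = 0 ∨ δ ω k = 1)
    {F : Type*} [NormedAddCommGroup F] {f : EuclideanSpace ℝ ι → F} (hf : Continuous f)
    (x v : EuclideanSpace ℝ ι) (η : ℝ) :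
    Integrable (fun ω => f (x - η • WithLp.toLp 2 fun k => δ ω k * v k)) μ := by
  have hmask : Measurable fun ω => WithLp.toLp 2 fun k => δ ω k * v k :=
    (PiLp.continuous_toLp 2 _).measurable.comp
      (measurable_pi_lambda _ fun k => (hmeas k).mul_const _)
  refine Integrable.comp_of_ae_mem_isCompact hf
    (measurable_const.sub (hmask.const_smul η)).aestronglyMeasurable
    (isCompact_closedBall x (|η| * ‖v‖)) ?_
  filter_upwards [ae_all_iff.2 h01] with ω hω
  rw [mem_closedBall_iff_norm, sub_sub_cancel_left, norm_neg, norm_smul, Real.norm_eq_abs]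
  gcongr
  exact norm_toLp_mul_le (fun k => by rcases hω k with h | h <;> simp [h]) v

end RandomMask

theorem wsbd_expected_descent_general {Ω : Type*} [MeasurableSpace Ω]
    (μ : Measure Ω) [IsProbabilityMeasure μ] {d : ℕ} (hd : 0 < d)
    (C : EuclideanSpace ℝ (Fin d) → ℝ) (L : ℝ)
    (hdiff : Differentiable ℝ C)
    (hlip : ∀ x y, ‖gradient C x - gradient C y‖ ≤ L * ‖x - y‖)
    (θ : EuclideanSpace ℝ (Fin d)) (η pmin : ℝ)
    (hη : 0 < η)
    (δ : Ω → Fin d → ℝ) (hmeas : ∀ k, Measurable fun ω => δ ω k)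
    (h01 : ∀ k, ∀ᵐ ω ∂μ, δ ω k = 0 ∨ δ ω k = 1)
    (hE : ∀ k, pmin ≤ ∫ ω, δ ω k ∂μ) :
    ∫ ω, C (θ - η • (WithLp.equiv 2 (Fin d → ℝ)).symm
        (fun k => δ ω k * gradient C θ k)) ∂μ ≤
      C θ - η * (pmin - L * η / 2) * ‖gradient C θ‖ ^ 2 := by
  set g := gradient C θ
  have : NeZero d := ⟨hd.ne'⟩
  have hL : 0 ≤ L := nonneg_of_norm_sub_le_mul_norm_sub hlip
  have hδ k : Integrable (fun ω => δ ω k) μ := integrable_of_ae_eq_zero_or_one (hmeas k) (h01 k)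
  have hS : Integrable (fun ω => ∑ k, δ ω k * g k ^ 2) μ :=
    integrable_finsetSum _ fun k _ => (hδ k).mul_const _
  have hstep : ∀ᵐ ω ∂μ, C (θ - η • WithLp.toLp 2 fun k => δ ω k * g k) ≤
      C θ - (η - L * η ^ 2 / 2) * ∑ k, δ ω k * g k ^ 2 := by
    filter_upwards [ae_all_iff.2 h01] with ω hω using masked_gradient_step_le hdiff hlip θ η hω
  calc ∫ ω, C (θ - η • WithLp.toLp 2 fun k => δ ω k * g k) ∂μ
      ≤ ∫ ω, (C θ - (η - L * η ^ 2 / 2) * ∑ k, δ ω k * g k ^ 2) ∂μ :=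
        integral_mono_ae (integrable_comp_sub_smul_toLp_mul hmeas h01 hdiff.continuous θ g η)
          ((integrable_const _).sub (hS.const_mul _)) hstep
    _ = C θ - (η - L * η ^ 2 / 2) * ∫ ω, ∑ k, δ ω k * g k ^ 2 ∂μ := by
        rw [integral_sub (integrable_const _) (hS.const_mul _), integral_const, integral_const_mul]
        simp
    _ ≤ C θ - η * (pmin - L * η / 2) * ‖g‖ ^ 2 := by
        linarith [mul_le_mul_of_nonneg_left (mul_norm_sq_le_integral_sum_mul_sq hδ hE g) hη.le,
          mul_le_mul_of_nonneg_left (integral_sum_mul_sq_le_norm_sq hmeas h01 g)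
            (by positivity : 0 ≤ L * η ^ 2 / 2)]

/-- Let `C : ℝ^d → ℝ` be `L`-smooth (differentiable with `L`-Lipschitz
gradient), `θ` fixed, `η > 0`, `p_min ∈ (0,1]`, and let `δ` be a random freezing mask
(coordinates in `{0,1}` a.s.) with `E[δ_k] ≥ p_min` for all `k`. Then the masked gradient step
satisfies `E[C(θ − η (δ ⊙ ∇C(θ)))] ≤ C(θ) − η (p_min − Lη/2) ‖∇C(θ)‖²`. -/
theorem wsbd_expected_descent {Ω : Type*} [MeasurableSpace Ω]
    (μ : Measure Ω) [IsProbabilityMeasure μ] {d : ℕ} (hd : 0 < d)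
    (C : EuclideanSpace ℝ (Fin d) → ℝ) (L : ℝ)
    (hdiff : Differentiable ℝ C)
    (hlip : ∀ x y, ‖gradient C x - gradient C y‖ ≤ L * ‖x - y‖)
    (θ : EuclideanSpace ℝ (Fin d)) (η pmin : ℝ)
    (hη : 0 < η) (hpmin : 0 < pmin) (hpmin1 : pmin ≤ 1)
    (δ : Ω → Fin d → ℝ) (hmeas : ∀ k, Measurable fun ω => δ ω k)
    (h01 : ∀ k, ∀ᵐ ω ∂μ, δ ω k = 0 ∨ δ ω k = 1)
    (hE : ∀ k, pmin ≤ ∫ ω, δ ω k ∂μ) :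
    ∫ ω, C (θ - η • (WithLp.equiv 2 (Fin d → ℝ)).symm
        (fun k => δ ω k * gradient C θ k)) ∂μ ≤
      C θ - η * (pmin - L * η / 2) * ‖gradient C θ‖ ^ 2 :=
  wsbd_expected_descent_general μ hd C L hdiff hlip θ η pmin hη δ hmeas h01 hE
end

section
/- Let C : ℝ^d → ℝ be L-smooth and bounded below by C*. Let (F_t)_{t≥0} be a filtration on a probability space, let (θ^t)_{t≥0} be random vectors in ℝ^d with θ^t F_t-measurable and C(θ^t) and ‖∇C(θ^t)‖² integrable for every t, and let (δ^t)_{t≥0} be random freezing masks satisfying E[δ^t_k | F_t] ≥ p_min almost surely for every coordinate k, with p_min > 0. Suppose the WSBD-SGD update θ^{t+1} = θ^t − η (δ^t ⊙ ∇C(θ^t)) holds almost surely, where η > 0 satisfies C_η := η (p_min − Lη/2) > 0. Then for every T ≥ 1, Σ_{t=0}^{T−1} E[‖∇C(θ^t)‖²] ≤ (E[C(θ⁰)] − C*) / C_η. -/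
/-!
`L`-smoothness gives the descent inequality `C(θ + v) ≤ C(θ) + ⟪∇C(θ), v⟫ + L/2 ‖v‖²`. For the
masked step `v = -η (δ ⊙ ∇C(θ))` with a `0/1` mask this reads
`C(θ') ≤ C(θ) - η ∑ₖ δₖ (∂ₖC)² + L η²/2 ‖∇C(θ)‖²`. Since `(∂ₖC(θᵗ))²` is `ℱₜ`-measurable, pulling
it out of the conditional expectation gives `E[δₖ (∂ₖC)²] ≥ p_min E[(∂ₖC)²]`, so in expectation
each step decreases `E[C(θᵗ)]` by at least `C_η E‖∇C(θᵗ)‖²`. Telescoping and `C ≥ C*` finish.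
-/

open MeasureTheory

section Smooth

variable {F : Type*} [NormedAddCommGroup F] [InnerProductSpace ℝ F] [CompleteSpace F]
  {C : F → ℝ} {L : ℝ}

theorem mul_norm_nonneg_of_lipschitz_gradient
    (hlip : ∀ x y, ‖gradient C x - gradient C y‖ ≤ L * ‖x - y‖) (v : F) : 0 ≤ L * ‖v‖ := by
  simpa using (norm_nonneg _).trans (hlip v 0)

theorem continuous_gradient_of_lipschitz
    (hlip : ∀ x y, ‖gradient C x - gradient C y‖ ≤ L * ‖x - y‖) : Continuous (gradient C) :=
  (LipschitzWith.of_dist_le' (K := L) fun x y => by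
    simpa only [dist_eq_norm] using hlip x y).continuous

theorem hasDerivAt_comp_lineMap (hdiff : Differentiable ℝ C) (x v : F) (s : ℝ) :
    HasDerivAt (fun s : ℝ => C (x + s • v)) (inner ℝ (gradient C (x + s • v)) v) s := by
  have hline : HasDerivAt (fun s : ℝ => x + s • v) v s := by
    simpa using ((hasDerivAt_id s).smul_const v).const_add x
  have hfderiv : fderiv ℝ C (x + s • v) v = inner ℝ (gradient C (x + s • v)) v := by
    rw [gradient, InnerProductSpace.toDual_symm_apply]
  rw [← hfderiv]
  exact (hdiff (x + s • v)).hasFDerivAt.comp_hasDerivAt s hline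

theorem le_add_inner_gradient_add_sq_of_lipschitz (hdiff : Differentiable ℝ C)
    (hlip : ∀ x y, ‖gradient C x - gradient C y‖ ≤ L * ‖x - y‖) (x v : F) :
    C (x + v) ≤ C x + inner ℝ (gradient C x) v + L / 2 * ‖v‖ ^ 2 := by
  set a : ℝ := inner ℝ (gradient C x) v
  set K : ℝ := L / 2 * ‖v‖ ^ 2
  set φ : ℝ → ℝ := fun s => C (x + s • v) - s * a - s ^ 2 * K
  have hφ : ∀ s, HasDerivAt φ (inner ℝ (gradient C (x + s • v)) v - a - 2 * s * K) s := by
    intro s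
    have hsq : HasDerivAt (fun s : ℝ => s ^ 2 * K) (2 * s * K) s := by
      simpa [mul_comm] using (hasDerivAt_pow 2 s).mul_const K
    exact ((hasDerivAt_comp_lineMap hdiff x v s).sub (hasDerivAt_mul_const a)).sub hsq
  have hφ_anti : AntitoneOn φ (Set.Icc 0 1) := by
    have hφ_diff : Differentiable ℝ φ := fun s => (hφ s).differentiableAt
    refine antitoneOn_of_deriv_nonpos (convex_Icc 0 1) hφ_diff.continuous.continuousOn
      hφ_diff.differentiableOn fun s hs => ?_
    rw [interior_Icc] at hs
    have hgrad : inner ℝ (gradient C (x + s • v) - gradient C x) v ≤ 2 * s * K :=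
      calc inner ℝ (gradient C (x + s • v) - gradient C x) v
          ≤ ‖gradient C (x + s • v) - gradient C x‖ * ‖v‖ := real_inner_le_norm _ _
        _ ≤ L * ‖x + s • v - x‖ * ‖v‖ := by gcongr; exact hlip _ _
        _ = 2 * s * K := by simp [K, norm_smul, abs_of_pos hs.1]; ring
    rw [inner_sub_left] at hgrad
    rw [(hφ s).deriv]
    linarith
  have h10 : φ 1 ≤ φ 0 := hφ_anti (by norm_num) (by norm_num) zero_le_one
  norm_num [φ] at h10
  linarith

end Smooth

section Mask

variable {d : ℕ}

def hadamard (δ : Fin d → ℝ) (v : EuclideanSpace ℝ (Fin d)) : EuclideanSpace ℝ (Fin d) :=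
  (WithLp.equiv 2 (Fin d → ℝ)).symm fun k => δ k * v k

theorem inner_hadamard (δ : Fin d → ℝ) (v : EuclideanSpace ℝ (Fin d)) :
    inner ℝ v (hadamard δ v) = ∑ k, δ k * v k ^ 2 := by
  simp only [hadamard, PiLp.inner_apply, WithLp.equiv_symm_apply, RCLike.inner_apply,
    conj_trivial]
  exact Finset.sum_congr rfl fun k _ => by ring

theorem norm_sq_hadamard (δ : Fin d → ℝ) (v : EuclideanSpace ℝ (Fin d)) :
    ‖hadamard δ v‖ ^ 2 = ∑ k, δ k ^ 2 * v k ^ 2 := by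
  simp only [EuclideanSpace.real_norm_sq_eq, hadamard, WithLp.equiv_symm_apply, mul_pow]

theorem norm_hadamard_le {δ : Fin d → ℝ} (hδ : ∀ k, δ k = 0 ∨ δ k = 1)
    (v : EuclideanSpace ℝ (Fin d)) : ‖hadamard δ v‖ ≤ ‖v‖ := by
  refine (pow_le_pow_iff_left₀ (norm_nonneg _) (norm_nonneg _) two_ne_zero).mp ?_
  rw [norm_sq_hadamard, EuclideanSpace.real_norm_sq_eq]
  exact Finset.sum_le_sum fun k _ => by rcases hδ k with h | h <;> simp [h, sq_nonneg]

theorem sq_apply_le_norm_sq (v : EuclideanSpace ℝ (Fin d)) (k : Fin d) : v k ^ 2 ≤ ‖v‖ ^ 2 := by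
  simpa only [Real.norm_eq_abs, sq_abs] using
    pow_le_pow_left₀ (norm_nonneg _) (PiLp.norm_apply_le v k) 2

theorem le_sub_hadamard_gradient {C : EuclideanSpace ℝ (Fin d) → ℝ} {L : ℝ}
    (hdiff : Differentiable ℝ C) (hlip : ∀ x y, ‖gradient C x - gradient C y‖ ≤ L * ‖x - y‖)
    {δ : Fin d → ℝ} (hδ : ∀ k, δ k = 0 ∨ δ k = 1) (x : EuclideanSpace ℝ (Fin d)) (η : ℝ) :
    C (x - η • hadamard δ (gradient C x)) ≤
      C x - η * ∑ k, δ k * gradient C x k ^ 2 + L * η ^ 2 / 2 * ‖gradient C x‖ ^ 2 := by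
  set g := gradient C x
  set w := hadamard δ g
  have hdesc := le_add_inner_gradient_add_sq_of_lipschitz hdiff hlip x (-(η • w))
  rw [← sub_eq_add_neg, inner_neg_right, real_inner_smul_right, inner_hadamard, norm_neg,
    norm_smul, mul_pow, Real.norm_eq_abs, sq_abs] at hdesc
  -- `L < 0` is possible on the trivial space, so this uses `0 ≤ L ‖u‖` rather than `0 ≤ L`
  have hw : L * ‖w‖ ^ 2 ≤ L * ‖g‖ ^ 2 := by
    have hwg := norm_hadamard_le hδ g
    nlinarith [mul_nonneg (add_nonneg (mul_norm_nonneg_of_lipschitz_gradient hlip w)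
      (mul_norm_nonneg_of_lipschitz_gradient hlip g)) (sub_nonneg.2 hwg)]
  nlinarith [mul_le_mul_of_nonneg_left hw (sq_nonneg η)]

end Mask

section Expectation

variable {Ω : Type*} {m m0 : MeasurableSpace Ω} {μ : Measure Ω}

theorem mul_integral_le_integral_mul_of_le_condExp [IsFiniteMeasure μ] (hm : m ≤ m0)
    {f g : Ω → ℝ} {p : ℝ} (hf : StronglyMeasurable[m] f) (hf0 : 0 ≤ f) (hfi : Integrable f μ)
    (hg : Integrable g μ) (hfg : Integrable (fun ω => f ω * g ω) μ)
    (hp : ∀ᵐ ω ∂μ, p ≤ μ[g | m] ω) :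
    p * ∫ ω, f ω ∂μ ≤ ∫ ω, f ω * g ω ∂μ := by
  have hpull := condExp_mul_of_stronglyMeasurable_left hf hfg hg
  calc p * ∫ ω, f ω ∂μ = ∫ ω, f ω * p ∂μ := by
        rw [← integral_const_mul]; simp_rw [mul_comm]
    _ ≤ ∫ ω, (f * μ[g | m]) ω ∂μ := by
        refine integral_mono_ae (hfi.mul_const p) (integrable_condExp.congr hpull) ?_
        filter_upwards [hp] with ω hω
        exact mul_le_mul_of_nonneg_left hω (hf0 ω)
    _ = ∫ ω, (μ[f * g | m]) ω ∂μ := integral_congr_ae hpull.symm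
    _ = ∫ ω, f ω * g ω ∂μ := integral_condExp hm

theorem integrable_mul_of_ae_eq_zero_or_one {δ f : Ω → ℝ} (hδ : AEStronglyMeasurable δ μ)
    (h01 : ∀ᵐ ω ∂μ, δ ω = 0 ∨ δ ω = 1) (hf : Integrable f μ) :
    Integrable (fun ω => δ ω * f ω) μ :=
  hf.norm.mono' (hδ.mul hf.1) <| by
    filter_upwards [h01] with ω h
    rcases h with h | h <;> simp [h]

variable {d : ℕ}

theorem integrable_apply_sq {G : Ω → EuclideanSpace ℝ (Fin d)} (hG : AEStronglyMeasurable G μ)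
    (hGint : Integrable (fun ω => ‖G ω‖ ^ 2) μ) (k : Fin d) :
    Integrable (fun ω => G ω k ^ 2) μ :=
  hGint.mono' (((by fun_prop : Continuous fun v : EuclideanSpace ℝ (Fin d) => v k)
    |>.comp_aestronglyMeasurable hG).pow 2) <| ae_of_all _ fun ω => by
      rw [Real.norm_eq_abs, abs_of_nonneg (sq_nonneg _)]
      exact sq_apply_le_norm_sq (G ω) k

theorem mul_integral_norm_sq_le_integral_sum_mask [IsFiniteMeasure μ] (hm : m ≤ m0)
    {G : Ω → EuclideanSpace ℝ (Fin d)} (hG : StronglyMeasurable[m] G)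
    (hGint : Integrable (fun ω => ‖G ω‖ ^ 2) μ) {δ : Ω → Fin d → ℝ}
    (hδmeas : ∀ k, Measurable fun ω => δ ω k) (h01 : ∀ k, ∀ᵐ ω ∂μ, δ ω k = 0 ∨ δ ω k = 1)
    {p : ℝ} (hp : ∀ k, ∀ᵐ ω ∂μ, p ≤ μ[fun ω' => δ ω' k | m] ω) :
    p * ∫ ω, ‖G ω‖ ^ 2 ∂μ ≤ ∫ ω, ∑ k, δ ω k * G ω k ^ 2 ∂μ := by
  have hGk_meas : ∀ k, StronglyMeasurable[m] fun ω => G ω k ^ 2 := fun k =>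
    ((by fun_prop : Continuous fun v : EuclideanSpace ℝ (Fin d) => v k).comp_stronglyMeasurable
      hG).pow 2
  have hGk : ∀ k, Integrable (fun ω => G ω k ^ 2) μ :=
    integrable_apply_sq (hG.mono hm).aestronglyMeasurable hGint
  have hδ : ∀ k, Integrable (fun ω => δ ω k) μ := fun k => by
    simpa using integrable_mul_of_ae_eq_zero_or_one (hδmeas k).aestronglyMeasurable (h01 k)
      (integrable_const (1 : ℝ))
  have hmask : ∀ k, Integrable (fun ω => δ ω k * G ω k ^ 2) μ := fun k =>
    integrable_mul_of_ae_eq_zero_or_one (hδmeas k).aestronglyMeasurable (h01 k) (hGk k)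
  calc p * ∫ ω, ‖G ω‖ ^ 2 ∂μ = ∑ k, p * ∫ ω, G ω k ^ 2 ∂μ := by
        simp_rw [← Finset.mul_sum, ← integral_finsetSum _ fun k _ => hGk k,
          EuclideanSpace.real_norm_sq_eq]
    _ ≤ ∑ k, ∫ ω, G ω k ^ 2 * δ ω k ∂μ := Finset.sum_le_sum fun k _ =>
        mul_integral_le_integral_mul_of_le_condExp hm (hGk_meas k) (fun ω => sq_nonneg _)
          (hGk k) (hδ k) (by simpa only [mul_comm] using hmask k) (hp k)
    _ = ∫ ω, ∑ k, δ ω k * G ω k ^ 2 ∂μ := by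
        simp_rw [integral_finsetSum _ fun k _ => hmask k, mul_comm]

theorem integral_descent_masked_gradient_step [IsFiniteMeasure μ] (hm : m ≤ m0)
    {C : EuclideanSpace ℝ (Fin d) → ℝ} {L : ℝ} (hdiff : Differentiable ℝ C)
    (hlip : ∀ x y, ‖gradient C x - gradient C y‖ ≤ L * ‖x - y‖)
    {θ θ' : Ω → EuclideanSpace ℝ (Fin d)} (hθ : StronglyMeasurable[m] θ)
    (hCθ : Integrable (fun ω => C (θ ω)) μ) (hCθ' : Integrable (fun ω => C (θ' ω)) μ)
    (hgint : Integrable (fun ω => ‖gradient C (θ ω)‖ ^ 2) μ) {δ : Ω → Fin d → ℝ}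
    (hδmeas : ∀ k, Measurable fun ω => δ ω k) (h01 : ∀ k, ∀ᵐ ω ∂μ, δ ω k = 0 ∨ δ ω k = 1)
    {p η : ℝ} (hη : 0 ≤ η) (hp : ∀ k, ∀ᵐ ω ∂μ, p ≤ μ[fun ω' => δ ω' k | m] ω)
    (hupdate : ∀ᵐ ω ∂μ, θ' ω = θ ω - η • hadamard (δ ω) (gradient C (θ ω))) :
    η * (p - L * η / 2) * ∫ ω, ‖gradient C (θ ω)‖ ^ 2 ∂μ ≤
      ∫ ω, C (θ ω) ∂μ - ∫ ω, C (θ' ω) ∂μ := by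
  set G := fun ω => gradient C (θ ω)
  have hG : StronglyMeasurable[m] G :=
    (continuous_gradient_of_lipschitz hlip).comp_stronglyMeasurable hθ
  set S := fun ω => ∑ k, δ ω k * G ω k ^ 2
  have hS_int : Integrable S μ := integrable_finsetSum _ fun k _ =>
    integrable_mul_of_ae_eq_zero_or_one (hδmeas k).aestronglyMeasurable (h01 k)
      (integrable_apply_sq (hG.mono hm).aestronglyMeasurable hgint k)
  have hS := mul_integral_norm_sq_le_integral_sum_mask hm hG hgint hδmeas h01 hp
  have hpointwise : ∀ᵐ ω ∂μ,
      C (θ' ω) ≤ C (θ ω) - η * S ω + L * η ^ 2 / 2 * ‖G ω‖ ^ 2 := by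
    filter_upwards [hupdate, ae_all_iff.2 h01] with ω hω hδω
    rw [hω]
    exact le_sub_hadamard_gradient hdiff hlip hδω (θ ω) η
  have hintegral : ∫ ω, C (θ' ω) ∂μ ≤
      ∫ ω, (C (θ ω) - η * S ω + L * η ^ 2 / 2 * ‖G ω‖ ^ 2) ∂μ :=
    integral_mono_ae hCθ' ((hCθ.sub (hS_int.const_mul η)).add (hgint.const_mul _)) hpointwise
  rw [integral_add, integral_sub hCθ (hS_int.const_mul η), integral_const_mul,
    integral_const_mul] at hintegral
  · nlinarith [mul_le_mul_of_nonneg_left hS hη]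
  · exact hCθ.sub (hS_int.const_mul η)
  · exact hgint.const_mul _

end Expectation

theorem wsbd_sgd_summed_bound_general {Ω : Type*} {m0 : MeasurableSpace Ω}
    (μ : Measure Ω) [IsProbabilityMeasure μ] {d : ℕ}
    (C : EuclideanSpace ℝ (Fin d) → ℝ) (L Cstar : ℝ)
    (hdiff : Differentiable ℝ C)
    (hlip : ∀ x y, ‖gradient C x - gradient C y‖ ≤ L * ‖x - y‖)
    (hbdd : ∀ x, Cstar ≤ C x)
    (ℱ : Filtration ℕ m0)
    (θ : ℕ → Ω → EuclideanSpace ℝ (Fin d))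
    (hadapt : ∀ t, StronglyMeasurable[ℱ t] (θ t))
    (hCint : ∀ t, Integrable (fun ω => C (θ t ω)) μ)
    (hgint : ∀ t, Integrable (fun ω => ‖gradient C (θ t ω)‖ ^ 2) μ)
    (δ : ℕ → Ω → Fin d → ℝ)
    (hδmeas : ∀ t k, Measurable fun ω => δ t ω k)
    (h01 : ∀ t k, ∀ᵐ ω ∂μ, δ t ω k = 0 ∨ δ t ω k = 1)
    (pmin : ℝ)
    (hcond : ∀ t k, ∀ᵐ ω ∂μ, pmin ≤ (μ[fun ω' => δ t ω' k | ℱ t]) ω)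
    (η Cη : ℝ) (hη : 0 < η)
    (hCη : Cη = η * (pmin - L * η / 2)) (hCηpos : 0 < Cη)
    (hupdate : ∀ t, ∀ᵐ ω ∂μ,
      θ (t + 1) ω = θ t ω - η • (WithLp.equiv 2 (Fin d → ℝ)).symm
        (fun k => δ t ω k * gradient C (θ t ω) k))
    (T : ℕ) :
    ∑ t ∈ Finset.range T, ∫ ω, ‖gradient C (θ t ω)‖ ^ 2 ∂μ ≤
      ((∫ ω, C (θ 0 ω) ∂μ) - Cstar) / Cη := by
  have hstep : ∀ t, Cη * ∫ ω, ‖gradient C (θ t ω)‖ ^ 2 ∂μ ≤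
      ∫ ω, C (θ t ω) ∂μ - ∫ ω, C (θ (t + 1) ω) ∂μ := fun t =>
    hCη ▸ integral_descent_masked_gradient_step (ℱ.le t) hdiff hlip (hadapt t) (hCint t)
      (hCint (t + 1)) (hgint t) (hδmeas t) (h01 t) hη.le (hcond t) (hupdate t)
  have hlast : Cstar ≤ ∫ ω, C (θ T ω) ∂μ := by
    simpa using integral_mono (integrable_const Cstar) (hCint T) fun ω => hbdd (θ T ω)
  rw [le_div_iff₀ hCηpos, Finset.sum_mul]
  calc ∑ t ∈ Finset.range T, (∫ ω, ‖gradient C (θ t ω)‖ ^ 2 ∂μ) * Cη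
      ≤ ∑ t ∈ Finset.range T, (∫ ω, C (θ t ω) ∂μ - ∫ ω, C (θ (t + 1) ω) ∂μ) :=
        Finset.sum_le_sum fun t _ => by linarith [hstep t]
    _ = ∫ ω, C (θ 0 ω) ∂μ - ∫ ω, C (θ T ω) ∂μ := Finset.sum_range_sub' _ _
    _ ≤ ∫ ω, C (θ 0 ω) ∂μ - Cstar := by linarith

/-- (Summed descent bound for WSBD-SGD.) Let `C : ℝ^d → ℝ` be `L`-smooth
and bounded below by `C*`. Let `(ℱ_t)` be a filtration, `(θ^t)` adapted random vectors with
`C(θ^t)` and `‖∇C(θ^t)‖²` integrable, and `(δ^t)` random freezing masks (coordinates in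
`{0,1}` a.s.) with `E[δ^t_k | ℱ_t] ≥ p_min > 0` a.s. If the WSBD-SGD update
`θ^{t+1} = θ^t − η (δ^t ⊙ ∇C(θ^t))` holds a.s. with `η > 0` and
`C_η := η (p_min − Lη/2) > 0`, then for every `T ≥ 1`,
`Σ_{t<T} E[‖∇C(θ^t)‖²] ≤ (E[C(θ⁰)] − C*) / C_η`. -/
theorem wsbd_sgd_summed_bound {Ω : Type*} {m0 : MeasurableSpace Ω}
    (μ : Measure Ω) [IsProbabilityMeasure μ] {d : ℕ} (hd : 0 < d)
    (C : EuclideanSpace ℝ (Fin d) → ℝ) (L Cstar : ℝ)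
    (hdiff : Differentiable ℝ C)
    (hlip : ∀ x y, ‖gradient C x - gradient C y‖ ≤ L * ‖x - y‖)
    (hbdd : ∀ x, Cstar ≤ C x)
    (ℱ : Filtration ℕ m0)
    (θ : ℕ → Ω → EuclideanSpace ℝ (Fin d))
    (hadapt : ∀ t, StronglyMeasurable[ℱ t] (θ t))
    (hCint : ∀ t, Integrable (fun ω => C (θ t ω)) μ)
    (hgint : ∀ t, Integrable (fun ω => ‖gradient C (θ t ω)‖ ^ 2) μ)
    (δ : ℕ → Ω → Fin d → ℝ)
    (hδmeas : ∀ t k, Measurable fun ω => δ t ω k)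
    (h01 : ∀ t k, ∀ᵐ ω ∂μ, δ t ω k = 0 ∨ δ t ω k = 1)
    (pmin : ℝ) (hpmin : 0 < pmin)
    (hcond : ∀ t k, ∀ᵐ ω ∂μ, pmin ≤ (μ[fun ω' => δ t ω' k | ℱ t]) ω)
    (η Cη : ℝ) (hη : 0 < η)
    (hCη : Cη = η * (pmin - L * η / 2)) (hCηpos : 0 < Cη)
    (hupdate : ∀ t, ∀ᵐ ω ∂μ,
      θ (t + 1) ω = θ t ω - η • (WithLp.equiv 2 (Fin d → ℝ)).symm
        (fun k => δ t ω k * gradient C (θ t ω) k))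
    (T : ℕ) (hT : 1 ≤ T) :
    ∑ t ∈ Finset.range T, ∫ ω, ‖gradient C (θ t ω)‖ ^ 2 ∂μ ≤
      ((∫ ω, C (θ 0 ω) ∂μ) - Cstar) / Cη :=
  wsbd_sgd_summed_bound_general μ C L Cstar hdiff hlip hbdd ℱ θ hadapt hCint hgint δ hδmeas h01 pmin
    hcond η Cη hη hCη hCηpos hupdate T
end

section
/- (General WSBD framework, summed descent inequality.) Let C : ℝ^d → ℝ be L-smooth and bounded below by C*. Let (F_t)_{t≥0} be a filtration, (θ^t)_{t≥0} random vectors with θ^t F_t-measurable, (u_t)_{t≥0} random vectors in ℝ^d, and (δ^t)_{t≥0} random freezing masks, with C(θ^t), ‖∇C(θ^t)‖², and ‖u_t‖² integrable for every t. Suppose there are constants c > 0 and K ≥ 0 such that, almost surely for every t, E[⟨∇C(θ^t), δ^t ⊙ u_t⟩ | F_t] ≥ c ‖∇C(θ^t)‖² and E[‖u_t‖² | F_t] ≤ K, and suppose θ^{t+1} = θ^t − η_t (δ^t ⊙ u_t) almost surely with step sizes η_t > 0. Then for every T ≥ 1, c Σ_{t=0}^{T−1} η_t E[‖∇C(θ^t)‖²]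 ≤ E[C(θ⁰)] − C* + (LK/2) Σ_{t=0}^{T−1} η_t². -/
open MeasureTheory
open scoped RealInnerProductSpace

/-!
Along the segment from `x` to `x + v`, the derivative of `s ↦ C (x + s • v)` exceeds its value
at `0` by at most `L s ‖v‖²`, which gives the descent lemma
`C (x + v) ≤ C x + ⟪∇C x, v⟫ + L/2 ‖v‖²`. Applied to the step `v = -η_t (δ^t ⊙ u_t)`, whose
norm is at most `η_t ‖u_t‖` because the mask has entries in `{0,1}`, and integrated, the tower
property turns the two conditional hypotheses into
`c η_t E‖∇C(θ^t)‖² ≤ E C(θ^t) − E C(θ^{t+1}) + (LK/2) η_t²`.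
Summing over `t < T` telescopes, and `E C(θ^T) ≥ C*`.
-/

theorem nonneg_of_forall_norm_sub_le_mul {E F : Type*} [NormedAddCommGroup E] [Nontrivial E]
    [SeminormedAddCommGroup F] {f : E → F} {L : ℝ} (h : ∀ x y, ‖f x - f y‖ ≤ L * ‖x - y‖) :
    0 ≤ L := by
  obtain ⟨x, hx⟩ := exists_ne (0 : E)
  refine nonneg_of_mul_nonneg_left ((norm_nonneg _).trans (h x 0)) ?_
  simpa using norm_pos_iff.2 hx

theorem sub_le_of_hasDerivAt_le_affine {f f' : ℝ → ℝ} {a b : ℝ}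
    (hf : ∀ s, HasDerivAt f (f' s) s) (hf' : ∀ s ∈ Set.Icc (0 : ℝ) 1, f' s ≤ a + b * s) :
    f 1 - f 0 ≤ a + b / 2 := by
  let g : ℝ → ℝ := fun s => f s - a * s - b / 2 * s ^ 2
  have hg : ∀ s, HasDerivAt g (f' s - a - b * s) s := by
    intro s
    refine (((hf s).sub ((hasDerivAt_id s).const_mul a)).sub
      ((hasDerivAt_pow 2 s).const_mul (b / 2))).congr_deriv ?_
    norm_num
    ring
  have hanti : AntitoneOn g (Set.Icc 0 1) :=
    antitoneOn_of_hasDerivWithinAt_nonpos (convex_Icc 0 1)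
      (fun s _ => (hg s).continuousAt.continuousWithinAt) (fun s _ => (hg s).hasDerivWithinAt)
      (fun s hs => by linarith [hf' s (interior_subset hs)])
  have := hanti (by norm_num) (by norm_num) zero_le_one
  simp only [g] at this
  linarith

section Smooth

variable {Ω E : Type*} {m0 : MeasurableSpace Ω} {μ : Measure Ω}
  [NormedAddCommGroup E] [InnerProductSpace ℝ E]

theorem Integrable.inner_of_integrable_norm_sq {f g : Ω → E} (hf : AEStronglyMeasurable f μ)
    (hg : AEStronglyMeasurable g μ) (hf2 : Integrable (fun ω => ‖f ω‖ ^ 2) μ)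
    (hg2 : Integrable (fun ω => ‖g ω‖ ^ 2) μ) :
    Integrable (fun ω => ⟪f ω, g ω⟫) μ := by
  refine ((hf2.add hg2).div_const 2).mono' (hf.inner hg) (ae_of_all _ fun ω => ?_)
  have := two_mul_le_add_sq ‖f ω‖ ‖g ω‖
  have := abs_real_inner_le_norm (f ω) (g ω)
  simp only [Real.norm_eq_abs, Pi.add_apply]
  linarith

variable [CompleteSpace E] {C : E → ℝ} {L : ℝ}

theorem image_add_le_of_lipschitz_gradient (hdiff : Differentiable ℝ C)
    (hlip : ∀ x y, ‖gradient C x - gradient C y‖ ≤ L * ‖x - y‖) (x v : E) :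
    C (x + v) ≤ C x + ⟪gradient C x, v⟫ + L / 2 * ‖v‖ ^ 2 := by
  have hderiv : ∀ s : ℝ,
      HasDerivAt (fun s : ℝ => C (x + s • v)) ⟪gradient C (x + s • v), v⟫ s := by
    intro s
    have hline : HasDerivAt (fun s : ℝ => x + s • v) v s := by
      simpa using ((hasDerivAt_id s).smul_const v).const_add x
    have : HasDerivAt (fun s : ℝ => C (x + s • v)) _ s :=
      (hdiff _).hasGradientAt.hasFDerivAt.comp_hasDerivAt s hline
    simpa using this
  have hbound : ∀ s ∈ Set.Icc (0 : ℝ) 1,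
      ⟪gradient C (x + s • v), v⟫ ≤ ⟪gradient C x, v⟫ + L * ‖v‖ ^ 2 * s := by
    intro s hs
    have : ⟪gradient C (x + s • v) - gradient C x, v⟫ ≤ L * ‖v‖ ^ 2 * s :=
      calc _ ≤ ‖gradient C (x + s • v) - gradient C x‖ * ‖v‖ := real_inner_le_norm _ _
        _ ≤ L * ‖(x + s • v) - x‖ * ‖v‖ := by gcongr; exact hlip _ _
        _ = L * ‖v‖ ^ 2 * s := by
          rw [add_sub_cancel_left, norm_smul, Real.norm_of_nonneg hs.1]; ring
    rwa [inner_sub_left, sub_le_iff_le_add'] at this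
  have := sub_le_of_hasDerivAt_le_affine hderiv hbound
  simp only [one_smul, zero_smul, add_zero] at this
  linarith

theorem integral_image_sub_smul_le (hdiff : Differentiable ℝ C)
    (hlip : ∀ x y, ‖gradient C x - gradient C y‖ ≤ L * ‖x - y‖) {x x' v : Ω → E} {η : ℝ}
    (hx' : ∀ᵐ ω ∂μ, x' ω = x ω - η • v ω) (hCx : Integrable (fun ω => C (x ω)) μ)
    (hCx' : Integrable (fun ω => C (x' ω)) μ)
    (hgv : Integrable (fun ω => ⟪gradient C (x ω), v ω⟫) μ)
    (hv : Integrable (fun ω => ‖v ω‖ ^ 2) μ) :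
    ∫ ω, C (x' ω) ∂μ ≤ ∫ ω, C (x ω) ∂μ - η * ∫ ω, ⟪gradient C (x ω), v ω⟫ ∂μ
      + L / 2 * η ^ 2 * ∫ ω, ‖v ω‖ ^ 2 ∂μ := by
  have hpt : ∀ᵐ ω ∂μ, C (x' ω) ≤ C (x ω) - η * ⟪gradient C (x ω), v ω⟫
      + L / 2 * η ^ 2 * ‖v ω‖ ^ 2 := by
    filter_upwards [hx'] with ω hω
    have := image_add_le_of_lipschitz_gradient hdiff hlip (x ω) (-(η • v ω))
    rwa [← sub_eq_add_neg, ← hω, inner_neg_right, real_inner_smul_right, norm_neg, norm_smul,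
      mul_pow, Real.norm_eq_abs, sq_abs, ← sub_eq_add_neg, ← mul_assoc] at this
  have hi1 : Integrable (fun ω => C (x ω) - η * ⟪gradient C (x ω), v ω⟫) μ :=
    hCx.sub (hgv.const_mul η)
  have hi2 : Integrable (fun ω => L / 2 * η ^ 2 * ‖v ω‖ ^ 2) μ := hv.const_mul _
  calc _ ≤ ∫ ω, (C (x ω) - η * ⟪gradient C (x ω), v ω⟫ + L / 2 * η ^ 2 * ‖v ω‖ ^ 2) ∂μ :=
        integral_mono_ae hCx' (hi1.add hi2) hpt
    _ = _ := by
      rw [integral_add hi1 hi2, integral_sub hCx (hgv.const_mul η), integral_const_mul,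
        integral_const_mul]

theorem mul_integral_norm_gradient_sq_le (hL : 0 ≤ L) (hdiff : Differentiable ℝ C)
    (hlip : ∀ x y, ‖gradient C x - gradient C y‖ ≤ L * ‖x - y‖) {x x' v : Ω → E}
    {η c K : ℝ} (hη : 0 ≤ η) (hx' : ∀ᵐ ω ∂μ, x' ω = x ω - η • v ω)
    (hCx : Integrable (fun ω => C (x ω)) μ) (hCx' : Integrable (fun ω => C (x' ω)) μ)
    (hgv : Integrable (fun ω => ⟪gradient C (x ω), v ω⟫) μ)
    (hv : Integrable (fun ω => ‖v ω‖ ^ 2) μ)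
    (hcorr : c * ∫ ω, ‖gradient C (x ω)‖ ^ 2 ∂μ ≤ ∫ ω, ⟪gradient C (x ω), v ω⟫ ∂μ)
    (hvK : ∫ ω, ‖v ω‖ ^ 2 ∂μ ≤ K) :
    c * (η * ∫ ω, ‖gradient C (x ω)‖ ^ 2 ∂μ) ≤
      ∫ ω, C (x ω) ∂μ - ∫ ω, C (x' ω) ∂μ + L * K / 2 * η ^ 2 := by
  have hdesc := integral_image_sub_smul_le hdiff hlip hx' hCx hCx' hgv hv
  have h1 := mul_le_mul_of_nonneg_left hcorr hη
  have h2 := mul_le_mul_of_nonneg_left hvK (by positivity : 0 ≤ L / 2 * η ^ 2)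
  linarith

end Smooth

section CondExp

variable {Ω : Type*} {m m0 : MeasurableSpace Ω} {μ : Measure Ω}

theorem integral_le_integral_of_ae_le_condExp (hm : m ≤ m0) [SigmaFinite (μ.trim hm)]
    {f g : Ω → ℝ} (hf : Integrable f μ) (h : f ≤ᵐ[μ] μ[g|m]) : ∫ ω, f ω ∂μ ≤ ∫ ω, g ω ∂μ :=
  (integral_mono_ae hf integrable_condExp h).trans_eq (integral_condExp hm)

theorem integral_le_of_condExp_le [IsProbabilityMeasure μ] (hm : m ≤ m0) {g : Ω → ℝ} {K : ℝ}
    (h : ∀ᵐ ω ∂μ, μ[g|m] ω ≤ K) : ∫ ω, g ω ∂μ ≤ K := by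
  simpa [integral_condExp hm] using integral_mono_ae integrable_condExp (integrable_const K) h

end CondExp

section Mask

variable {ι : Type*}

/-- The coordinatewise product `δ ⊙ u`. -/
def applyMask (δ : ι → ℝ) (u : EuclideanSpace ℝ ι) : EuclideanSpace ℝ ι :=
  (WithLp.equiv 2 (ι → ℝ)).symm fun k => δ k * u k

theorem norm_applyMask_le [Fintype ι] {δ : ι → ℝ} (hδ : ∀ k, |δ k| ≤ 1)
    (u : EuclideanSpace ℝ ι) : ‖applyMask δ u‖ ≤ ‖u‖ := by
  rw [EuclideanSpace.norm_eq, EuclideanSpace.norm_eq]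
  refine Real.sqrt_le_sqrt (Finset.sum_le_sum fun k _ => ?_)
  simp only [applyMask, WithLp.equiv_symm_apply, PiLp.toLp_apply, norm_mul, mul_pow,
    Real.norm_eq_abs]
  exact mul_le_of_le_one_left (by positivity) (pow_le_one₀ (abs_nonneg _) (hδ k))

theorem ae_norm_applyMask_le [Fintype ι] {Ω : Type*} [MeasurableSpace Ω] {μ : Measure Ω}
    {δ : Ω → ι → ℝ} (h01 : ∀ k, ∀ᵐ ω ∂μ, δ ω k = 0 ∨ δ ω k = 1) (u : Ω → EuclideanSpace ℝ ι) :
    ∀ᵐ ω ∂μ, ‖applyMask (δ ω) (u ω)‖ ≤ ‖u ω‖ := by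
  filter_upwards [ae_all_iff.2 h01] with ω hω
  refine norm_applyMask_le (fun k => ?_) _
  rcases hω k with h | h <;> simp [h]

theorem measurable_applyMask {Ω : Type*} [MeasurableSpace Ω] {δ : Ω → ι → ℝ}
    {u : Ω → EuclideanSpace ℝ ι} (hδ : ∀ k, Measurable fun ω => δ ω k) (hu : Measurable u) :
    Measurable fun ω => applyMask (δ ω) (u ω) :=
  (WithLp.measurable_toLp 2 (ι → ℝ)).comp (measurable_pi_lambda _ fun k =>
    (hδ k).mul ((measurable_pi_apply k).comp ((WithLp.measurable_ofLp 2 _).comp hu)))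

end Mask

theorem Finset.sum_range_le_sub_add_sum {a b e : ℕ → ℝ} {m : ℝ}
    (h : ∀ t, e t ≤ a t - a (t + 1) + b t) (T : ℕ) (hm : m ≤ a T) :
    ∑ t ∈ range T, e t ≤ a 0 - m + ∑ t ∈ range T, b t := by
  calc _ ≤ ∑ t ∈ range T, (a t - a (t + 1) + b t) := sum_le_sum fun t _ => h t
    _ = a 0 - a T + ∑ t ∈ range T, b t := by rw [sum_add_distrib, sum_range_sub']
    _ ≤ _ := by linarith

theorem wsbd_general_summed_bound_general {Ω : Type*} {m0 : MeasurableSpace Ω}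
    (μ : Measure Ω) [IsProbabilityMeasure μ] {d : ℕ} (hd : 0 < d)
    (C : EuclideanSpace ℝ (Fin d) → ℝ) (L Cstar : ℝ)
    (hdiff : Differentiable ℝ C)
    (hlip : ∀ x y, ‖gradient C x - gradient C y‖ ≤ L * ‖x - y‖)
    (hbdd : ∀ x, Cstar ≤ C x)
    (ℱ : Filtration ℕ m0)
    (θ : ℕ → Ω → EuclideanSpace ℝ (Fin d))
    (hadapt : ∀ t, StronglyMeasurable[ℱ t] (θ t))
    (u : ℕ → Ω → EuclideanSpace ℝ (Fin d))
    (humeas : ∀ t, Measurable (u t))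
    (δ : ℕ → Ω → Fin d → ℝ)
    (hδmeas : ∀ t k, Measurable fun ω => δ t ω k)
    (h01 : ∀ t k, ∀ᵐ ω ∂μ, δ t ω k = 0 ∨ δ t ω k = 1)
    (hCint : ∀ t, Integrable (fun ω => C (θ t ω)) μ)
    (hgint : ∀ t, Integrable (fun ω => ‖gradient C (θ t ω)‖ ^ 2) μ)
    (huint : ∀ t, Integrable (fun ω => ‖u t ω‖ ^ 2) μ)
    (c K : ℝ)
    (hdescent : ∀ t, ∀ᵐ ω ∂μ,
      c * ‖gradient C (θ t ω)‖ ^ 2 ≤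
        (μ[fun ω' => ⟪gradient C (θ t ω'),
            (WithLp.equiv 2 (Fin d → ℝ)).symm (fun k => δ t ω' k * u t ω' k)⟫ | ℱ t]) ω)
    (hbound : ∀ t, ∀ᵐ ω ∂μ, (μ[fun ω' => ‖u t ω'‖ ^ 2 | ℱ t]) ω ≤ K)
    (η : ℕ → ℝ) (hη : ∀ t, 0 < η t)
    (hupdate : ∀ t, ∀ᵐ ω ∂μ,
      θ (t + 1) ω = θ t ω - η t • (WithLp.equiv 2 (Fin d → ℝ)).symm
        (fun k => δ t ω k * u t ω k))
    (T : ℕ) :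
    c * ∑ t ∈ Finset.range T, η t * ∫ ω, ‖gradient C (θ t ω)‖ ^ 2 ∂μ ≤
      (∫ ω, C (θ 0 ω) ∂μ) - Cstar + (L * K / 2) * ∑ t ∈ Finset.range T, η t ^ 2 := by
  have hL : 0 ≤ L := by
    have : Nonempty (Fin d) := ⟨⟨0, hd⟩⟩
    exact nonneg_of_forall_norm_sub_le_mul hlip
  set v : ℕ → Ω → EuclideanSpace ℝ (Fin d) := fun t ω => applyMask (δ t ω) (u t ω)
  have hvm : ∀ t, Measurable (v t) := fun t => measurable_applyMask (hδmeas t) (humeas t)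
  have hgm : ∀ t, Measurable fun ω => gradient C (θ t ω) := fun t =>
    (LipschitzWith.of_dist_le' (f := gradient C) fun x y => by
      simpa only [dist_eq_norm] using hlip x y).continuous.measurable.comp
      ((hadapt t).mono (ℱ.le t)).measurable
  have hvu : ∀ t, ∀ᵐ ω ∂μ, ‖v t ω‖ ^ 2 ≤ ‖u t ω‖ ^ 2 := fun t =>
    (ae_norm_applyMask_le (h01 t) (u t)).mono fun _ h => pow_le_pow_left₀ (norm_nonneg _) h 2
  have hv2 : ∀ t, Integrable (fun ω => ‖v t ω‖ ^ 2) μ := fun t =>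
    (huint t).mono' ((hvm t).norm.pow_const 2).aestronglyMeasurable <| by
      filter_upwards [hvu t] with ω hω
      rwa [Real.norm_of_nonneg (by positivity)]
  have hstep : ∀ t, c * (η t * ∫ ω, ‖gradient C (θ t ω)‖ ^ 2 ∂μ) ≤
      ∫ ω, C (θ t ω) ∂μ - ∫ ω, C (θ (t + 1) ω) ∂μ + L * K / 2 * η t ^ 2 := fun t =>
    mul_integral_norm_gradient_sq_le hL hdiff hlip (hη t).le (hupdate t) (hCint t) (hCint (t + 1))
      (Integrable.inner_of_integrable_norm_sq (hgm t).aestronglyMeasurable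
        (hvm t).aestronglyMeasurable (hgint t) (hv2 t))
      (hv2 t)
      (by simpa only [integral_const_mul] using
        integral_le_integral_of_ae_le_condExp (ℱ.le t) ((hgint t).const_mul c) (hdescent t))
      ((integral_mono_ae (hv2 t) (huint t) (hvu t)).trans
        (integral_le_of_condExp_le (ℱ.le t) (hbound t)))
  rw [Finset.mul_sum, Finset.mul_sum]
  exact Finset.sum_range_le_sub_add_sum hstep T
    (by simpa using integral_mono (integrable_const Cstar) (hCint T) fun ω => hbdd (θ T ω))

/-- **General WSBD framework, summed descent inequality.** Let `C : ℝ^d → ℝ`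
be `L`-smooth and bounded below by `C*`. Let `(ℱ_t)` be a filtration, `(θ^t)` adapted random
vectors, `(u_t)` random update vectors, and `(δ^t)` random freezing masks (coordinates in
`{0,1}` a.s.), with `C(θ^t)`, `‖∇C(θ^t)‖²`, `‖u_t‖²` integrable. If there are constants
`c > 0`, `K ≥ 0` with (a.s. for every `t`)
`E[⟨∇C(θ^t), δ^t ⊙ u_t⟩ | ℱ_t] ≥ c ‖∇C(θ^t)‖²` and `E[‖u_t‖² | ℱ_t] ≤ K`, and
`θ^{t+1} = θ^t − η_t (δ^t ⊙ u_t)` a.s. with step sizes `η_t > 0`, then for every `T ≥ 1`,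
`c Σ_{t<T} η_t E[‖∇C(θ^t)‖²] ≤ E[C(θ⁰)] − C* + (LK/2) Σ_{t<T} η_t²`. -/
theorem wsbd_general_summed_bound {Ω : Type*} {m0 : MeasurableSpace Ω}
    (μ : Measure Ω) [IsProbabilityMeasure μ] {d : ℕ} (hd : 0 < d)
    (C : EuclideanSpace ℝ (Fin d) → ℝ) (L Cstar : ℝ)
    (hdiff : Differentiable ℝ C)
    (hlip : ∀ x y, ‖gradient C x - gradient C y‖ ≤ L * ‖x - y‖)
    (hbdd : ∀ x, Cstar ≤ C x)
    (ℱ : Filtration ℕ m0)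
    (θ : ℕ → Ω → EuclideanSpace ℝ (Fin d))
    (hadapt : ∀ t, StronglyMeasurable[ℱ t] (θ t))
    (u : ℕ → Ω → EuclideanSpace ℝ (Fin d))
    (humeas : ∀ t, Measurable (u t))
    (δ : ℕ → Ω → Fin d → ℝ)
    (hδmeas : ∀ t k, Measurable fun ω => δ t ω k)
    (h01 : ∀ t k, ∀ᵐ ω ∂μ, δ t ω k = 0 ∨ δ t ω k = 1)
    (hCint : ∀ t, Integrable (fun ω => C (θ t ω)) μ)
    (hgint : ∀ t, Integrable (fun ω => ‖gradient C (θ t ω)‖ ^ 2) μ)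
    (huint : ∀ t, Integrable (fun ω => ‖u t ω‖ ^ 2) μ)
    (c K : ℝ) (hc : 0 < c) (hK : 0 ≤ K)
    (hdescent : ∀ t, ∀ᵐ ω ∂μ,
      c * ‖gradient C (θ t ω)‖ ^ 2 ≤
        (μ[fun ω' => ⟪gradient C (θ t ω'),
            (WithLp.equiv 2 (Fin d → ℝ)).symm (fun k => δ t ω' k * u t ω' k)⟫ | ℱ t]) ω)
    (hbound : ∀ t, ∀ᵐ ω ∂μ, (μ[fun ω' => ‖u t ω'‖ ^ 2 | ℱ t]) ω ≤ K)
    (η : ℕ → ℝ) (hη : ∀ t, 0 < η t)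
    (hupdate : ∀ t, ∀ᵐ ω ∂μ,
      θ (t + 1) ω = θ t ω - η t • (WithLp.equiv 2 (Fin d → ℝ)).symm
        (fun k => δ t ω k * u t ω k))
    (T : ℕ) (hT : 1 ≤ T) :
    c * ∑ t ∈ Finset.range T, η t * ∫ ω, ‖gradient C (θ t ω)‖ ^ 2 ∂μ ≤
      (∫ ω, C (θ 0 ω) ∂μ) - Cstar + (L * K / 2) * ∑ t ∈ Finset.range T, η t ^ 2 :=
  wsbd_general_summed_bound_general μ hd C L Cstar hdiff hlip hbdd ℱ θ hadapt u humeas δ hδmeas h01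
    hCint hgint huint c K hdescent hbound η hη hupdate T
end
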